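/- arXiv:1804.10920 — 8 statements merged into one kernel-verified Lean document; each statement's English description precedes it below -/
import Mathlib

section
/- Let G be a finite simple graph and S ⊆ V(G) such that G ⊕ S is triangle-free. Let u, v ∈ S be distinct vertices with uv ∉ E(G). Then S is contained in the union of the closed neighborhoods of u and v in G, that is, S ⊆ N_G[u] ∪ N_G[v]. -/
/-- The partial complement `G ⊕ S` of a simple graph `G` with respect to a vertex set `S`:
distinct vertices `u, v` are adjacent iff either they are adjacent in `G` and not both
belong to `S`, or they are nonadjacent in `G` and both belong to `S`. -/
def SimpleGraph.partialComplement {V : Type*} (G : SimpleGraph V) (S : Set V) :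
    SimpleGraph V where
  Adj u v := u ≠ v ∧ ((G.Adj u v ∧ ¬(u ∈ S ∧ v ∈ S)) ∨ (¬ G.Adj u v ∧ u ∈ S ∧ v ∈ S))
  symm := by
    constructor
    intro u v h
    obtain ⟨hne, h⟩ := h
    refine ⟨hne.symm, ?_⟩
    rcases h with ⟨ha, hs⟩ | ⟨ha, hu, hv⟩
    · exact Or.inl ⟨ha.symm, fun hc => hs ⟨hc.2, hc.1⟩⟩
    · exact Or.inr ⟨fun hvu => ha hvu.symm, hv, hu⟩
  loopless := ⟨fun v h => h.1 rfl⟩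

namespace SimpleGraph

variable {V : Type*} {G : SimpleGraph V} {S : Set V} {x y : V}

theorem partialComplement_adj_of_mem (hx : x ∈ S) (hy : y ∈ S) :
    (G.partialComplement S).Adj x y ↔ x ≠ y ∧ ¬ G.Adj x y := by
  simp [partialComplement, hx, hy]

end SimpleGraph

theorem solution_subset_union_closed_neighborhoods_general {V : Type*}
    (G : SimpleGraph V) (S : Set V)
    (h : (G.partialComplement S).CliqueFree 3)
    (u v : V) (hu : u ∈ S) (hv : v ∈ S) (huv : u ≠ v) (hadj : ¬ G.Adj u v) :
    S ⊆ insert u (G.neighborSet u) ∪ insert v (G.neighborSet v) := by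
  classical
  intro w hw
  by_contra hw'
  simp only [Set.mem_union, Set.mem_insert_iff, SimpleGraph.mem_neighborSet, not_or] at hw'
  obtain ⟨⟨hwu, huw⟩, hwv, hvw⟩ := hw'
  refine h {u, v, w} (SimpleGraph.is3Clique_triple_iff.2 ⟨?_, ?_, ?_⟩)
  · exact (SimpleGraph.partialComplement_adj_of_mem hu hv).2 ⟨huv, hadj⟩
  · exact (SimpleGraph.partialComplement_adj_of_mem hu hw).2 ⟨Ne.symm hwu, huw⟩
  · exact (SimpleGraph.partialComplement_adj_of_mem hv hw).2 ⟨Ne.symm hwv, hvw⟩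

/-- If `G ⊕ S` is triangle-free and `u, v ∈ S` are distinct nonadjacent vertices of `G`,
then `S` is contained in the union of the closed neighborhoods of `u` and `v` in `G`. -/
theorem solution_subset_union_closed_neighborhoods {V : Type*} [Fintype V]
    (G : SimpleGraph V) (S : Set V)
    (h : (G.partialComplement S).CliqueFree 3)
    (u v : V) (hu : u ∈ S) (hv : v ∈ S) (huv : u ≠ v) (hadj : ¬ G.Adj u v) :
    S ⊆ insert u (G.neighborSet u) ∪ insert v (G.neighborSet v) :=
  solution_subset_union_closed_neighborhoods_general G S h u v hu hv huv hadj
end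

section
/- Let G be a finite simple graph and S ⊆ V(G) such that G ⊕ S is triangle-free. Let u, v ∈ S be distinct vertices with uv ∉ E(G). Then every common neighbor of u and v in G belongs to S, that is, N_G(u) ∩ N_G(v) ⊆ S. -/
namespace SimpleGraph

variable {V : Type*} {G : SimpleGraph V} {S : Set V} {u v : V}

theorem partialComplement_adj_of_not_adj (huv : u ≠ v) (hu : u ∈ S) (hv : v ∈ S)
    (h : ¬G.Adj u v) : (G.partialComplement S).Adj u v :=
  ⟨huv, Or.inr ⟨h, hu, hv⟩⟩

theorem partialComplement_adj_of_adj_of_notMem (h : G.Adj u v) (hv : v ∉ S) :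
    (G.partialComplement S).Adj u v :=
  ⟨h.ne, Or.inl ⟨h, fun huv => hv huv.2⟩⟩

end SimpleGraph

theorem common_neighbors_subset_solution_general {V : Type*}
    (G : SimpleGraph V) (S : Set V)
    (h : (G.partialComplement S).CliqueFree 3)
    (u v : V) (hu : u ∈ S) (hv : v ∈ S) (huv : u ≠ v) (hadj : ¬ G.Adj u v) :
    G.neighborSet u ∩ G.neighborSet v ⊆ S := by
  rintro w ⟨hwu, hwv⟩
  by_contra hw
  classical
  exact h {u, v, w} <| SimpleGraph.is3Clique_triple_iff.2
    ⟨SimpleGraph.partialComplement_adj_of_not_adj huv hu hv hadj,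
      SimpleGraph.partialComplement_adj_of_adj_of_notMem hwu hw,
      SimpleGraph.partialComplement_adj_of_adj_of_notMem hwv hw⟩

/-- If `G ⊕ S` is triangle-free and `u, v ∈ S` are distinct nonadjacent vertices of `G`,
then every common neighbor of `u` and `v` in `G` belongs to `S`. -/
theorem common_neighbors_subset_solution {V : Type*} [Fintype V]
    (G : SimpleGraph V) (S : Set V)
    (h : (G.partialComplement S).CliqueFree 3)
    (u v : V) (hu : u ∈ S) (hv : v ∈ S) (huv : u ≠ v) (hadj : ¬ G.Adj u v) :
    G.neighborSet u ∩ G.neighborSet v ⊆ S :=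
  common_neighbors_subset_solution_general G S h u v hu hv huv hadj
end

section
/- Let G be a finite simple graph and S ⊆ V(G) such that G ⊕ S is triangle-free. Let u, v ∈ S be distinct vertices with uv ∉ E(G). Then the set (N_G(u) \ N_G(v)) ∩ S is a clique in G, and the set (N_G(u) \ N_G(v)) \ S is an independent set in G; in particular, the subgraph of G induced by N_G(u) \ N_G(v) is a split graph. -/
/-- An independent set in a simple graph: a set of pairwise nonadjacent vertices. -/
def SimpleGraph.IsIndepSet' {V : Type*} (G : SimpleGraph V) (A : Set V) : Prop :=
  ∀ ⦃x⦄, x ∈ A → ∀ ⦃y⦄, y ∈ A → x ≠ y → ¬ G.Adj x y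

/-!
In `H = G ⊕ S`, adjacency agrees with `G` on pairs with an endpoint outside `S` and with the
complement of `G` on pairs inside `S`. Since `H` is triangle-free, every `H`-neighbourhood is
`H`-independent. The part of `N_G(u) \ N_G(v)` inside `S` lies in `N_H(v)`, and `H`-independence
inside `S` is a `G`-clique; the part outside `S` lies in `N_H(u)`, and `H`-independence outside
`S` is `G`-independence.
-/

namespace SimpleGraph

variable {V : Type*} (G : SimpleGraph V) {S : Set V} {a b : V}

theorem partialComplement_adj_of_right_notMem (hb : b ∉ S) :
    (G.partialComplement S).Adj a b ↔ G.Adj a b := by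
  simp only [partialComplement, hb, and_false, not_false_eq_true, and_true, or_false]
  exact ⟨fun h => h.2, fun h => ⟨h.ne, h⟩⟩

theorem partialComplement_adj_of_mem_s4 (ha : a ∈ S) (hb : b ∈ S) :
    (G.partialComplement S).Adj a b ↔ a ≠ b ∧ ¬G.Adj a b := by
  simp [partialComplement, ha, hb]

theorem neighborSet_sdiff_subset_neighborSet_partialComplement (u : V) :
    G.neighborSet u \ S ⊆ (G.partialComplement S).neighborSet u :=
  fun _ ⟨hx, hxS⟩ => (G.partialComplement_adj_of_right_notMem hxS).2 hx

theorem neighborSet_compl_inter_subset_neighborSet_partialComplement {v : V} (hv : v ∈ S) :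
    Gᶜ.neighborSet v ∩ S ⊆ (G.partialComplement S).neighborSet v :=
  fun _ ⟨hx, hxS⟩ => (G.partialComplement_adj_of_mem_s4 hv hxS).2 hx

theorem isClique_of_isIndepSet_partialComplement {A : Set V} (hAS : A ⊆ S)
    (hA : (G.partialComplement S).IsIndepSet A) : G.IsClique A := by
  intro x hx y hy hxy
  by_contra hnadj
  exact hA hx hy hxy ((G.partialComplement_adj_of_mem_s4 (hAS hx) (hAS hy)).2 ⟨hxy, hnadj⟩)

theorem isIndepSet_of_isIndepSet_partialComplement {A : Set V} (hAS : Disjoint A S)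
    (hA : (G.partialComplement S).IsIndepSet A) : G.IsIndepSet A :=
  fun _ hx _ hy hxy hadj =>
    hA hx hy hxy ((G.partialComplement_adj_of_right_notMem (hAS.notMem_of_mem_left hy)).2 hadj)

end SimpleGraph

open SimpleGraph in
theorem nonclique_solution_split_structure_general {V : Type*}
    (G : SimpleGraph V) (S : Set V)
    (h : (G.partialComplement S).CliqueFree 3)
    (u v : V) (hv : v ∈ S) (hadj : ¬ G.Adj u v) :
    G.IsClique ((G.neighborSet u \ G.neighborSet v) ∩ S) ∧
    G.IsIndepSet' ((G.neighborSet u \ G.neighborSet v) \ S) ∧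
    ∃ C I : Set V,
      C ∪ I = G.neighborSet u \ G.neighborSet v ∧ Disjoint C I ∧
      G.IsClique C ∧ G.IsIndepSet' I := by
  have hN := isIndepSet_neighborSet_of_triangleFree _ h
  have hinS : (G.neighborSet u \ G.neighborSet v) ∩ S ⊆ Gᶜ.neighborSet v ∩ S :=
    fun x ⟨⟨hux, hvx⟩, hxS⟩ => ⟨⟨fun hvx' => hadj (hvx' ▸ hux), hvx⟩, hxS⟩
  have hcl : G.IsClique ((G.neighborSet u \ G.neighborSet v) ∩ S) :=
    G.isClique_of_isIndepSet_partialComplement Set.inter_subset_right <| Set.Pairwise.mono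
      (hinS.trans (G.neighborSet_compl_inter_subset_neighborSet_partialComplement hv)) (hN v)
  have hind : G.IsIndepSet ((G.neighborSet u \ G.neighborSet v) \ S) :=
    G.isIndepSet_of_isIndepSet_partialComplement Set.disjoint_sdiff_left <| Set.Pairwise.mono
      ((Set.sdiff_subset_sdiff_left Set.sdiff_subset).trans
        (G.neighborSet_sdiff_subset_neighborSet_partialComplement u)) (hN u)
  exact ⟨hcl, hind, _, _, Set.inter_union_sdiff _ _, Set.disjoint_sdiff_inter.symm, hcl, hind⟩

/-- If `G ⊕ S` is triangle-free and `u, v ∈ S` are distinct nonadjacent vertices of `G`,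
then `(N_G(u) \ N_G(v)) ∩ S` is a clique in `G` and `(N_G(u) \ N_G(v)) \ S` is an
independent set in `G`; in particular the subgraph of `G` induced by `N_G(u) \ N_G(v)`
is a split graph, i.e., `N_G(u) \ N_G(v)` is partitioned into a clique and an
independent set of `G`. -/
theorem nonclique_solution_split_structure {V : Type*} [Fintype V]
    (G : SimpleGraph V) (S : Set V)
    (h : (G.partialComplement S).CliqueFree 3)
    (u v : V) (hu : u ∈ S) (hv : v ∈ S) (huv : u ≠ v) (hadj : ¬ G.Adj u v) :
    G.IsClique ((G.neighborSet u \ G.neighborSet v) ∩ S) ∧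
    G.IsIndepSet' ((G.neighborSet u \ G.neighborSet v) \ S) ∧
    ∃ C I : Set V,
      C ∪ I = G.neighborSet u \ G.neighborSet v ∧ Disjoint C I ∧
      G.IsClique C ∧ G.IsIndepSet' I :=
  nonclique_solution_split_structure_general G S h u v hv hadj
end

section
/- Let k be a positive integer and let M be a symmetric k × k matrix with entries in {0, 1, ⋆}. Define the symmetric 2k × 2k matrix M' (with rows and columns indexed by 1, …, 2k) by: M'[i, j] = M[⌈i/2⌉, ⌈j/2⌉] if at least one of i, j is even, and M'[i, j] = ¬M[(i+1)/2, (j+1)/2] if both i and j are odd, where ¬0 = 1, ¬1 = 0, and ¬⋆ = ⋆. Then for every finite simple graph G, there exists a set S ⊆ V(G) such that G ⊕ S admits an M-partition if and only if G admits an M'-partition. -/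
/-- A graph `G` admits an `M`-partition for a `k × k` matrix `M` with entries in
`{0, 1, ⋆}` (encoded as `Option Bool` with `some false = 0`, `some true = 1`,
`none = ⋆`) if there is `f : V → Fin k` such that for all distinct `u, v`:
if `M[f u, f v] = 1` then `uv` is an edge, and if `M[f u, f v] = 0` then `uv` is
a non-edge. -/
def SimpleGraph.HasMPartition {V : Type*} {k : ℕ} (G : SimpleGraph V)
    (M : Fin k → Fin k → Option Bool) : Prop :=
  ∃ f : V → Fin k, ∀ u v : V, u ≠ v →
    (M (f u) (f v) = some true → G.Adj u v) ∧
    (M (f u) (f v) = some false → ¬ G.Adj u v)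

/-- Negation of a matrix entry: `¬0 = 1`, `¬1 = 0`, `¬⋆ = ⋆`. -/
def negEntry : Option Bool → Option Bool
  | some b => some (!b)
  | none => none

/-- The `2k × 2k` matrix `M'` obtained from a `k × k` matrix `M`: with rows and columns
indexed by `1, …, 2k` (here `0`-indexed by `Fin (2*k)`, so index `i : Fin (2*k)`
corresponds to the `1`-based index `i + 1`), `M'[i,j] = M[⌈i/2⌉, ⌈j/2⌉]` if at least
one of the `1`-based indices `i, j` is even, and `M'[i,j] = ¬M[(i+1)/2, (j+1)/2]` if
both are odd. -/
def doubledMatrix {k : ℕ} (M : Fin k → Fin k → Option Bool) :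
    Fin (2 * k) → Fin (2 * k) → Option Bool := fun i j =>
  if i.val % 2 = 1 ∨ j.val % 2 = 1 then
    M ⟨i.val / 2, by have := i.isLt; omega⟩ ⟨j.val / 2, by have := j.isLt; omega⟩
  else
    negEntry (M ⟨i.val / 2, by have := i.isLt; omega⟩ ⟨j.val / 2, by have := j.isLt; omega⟩)

/-!
A vertex of class `a` in an `M`-partition of `G ⊕ S` is sent to class `2a` of `M'` (0-based)
if it lies in `S` and to class `2a + 1` otherwise; conversely a class `i` of `M'` is split
into its half `i / 2` and its parity, the even classes forming `S`. Adjacency of two distinct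
vertices changes under `⊕ S` exactly when both lie in `S`, i.e. exactly when both classes are
even, and these are precisely the entries that `M'` negates.
-/

def EntryAllows (e : Option Bool) (p : Prop) : Prop :=
  (e = some true → p) ∧ (e = some false → ¬p)

lemma entryAllows_negEntry (e : Option Bool) (p : Prop) :
    EntryAllows (negEntry e) p ↔ EntryAllows e ¬p := by
  rcases e with _ | _ | _ <;> simp [EntryAllows, negEntry]

namespace SimpleGraph

variable {V : Type*} (G : SimpleGraph V)

lemma hasMPartition_iff_entryAllows {k : ℕ} (M : Fin k → Fin k → Option Bool) :
    G.HasMPartition M ↔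
      ∃ f : V → Fin k, ∀ u v, u ≠ v → EntryAllows (M (f u) (f v)) (G.Adj u v) :=
  Iff.rfl

variable (S : Set V) {u v : V}

lemma partialComplement_adj_iff (huv : u ≠ v) :
    (G.partialComplement S).Adj u v ↔ (G.Adj u v ↔ ¬(u ∈ S ∧ v ∈ S)) := by
  change u ≠ v ∧ _ ↔ _
  tauto

lemma entryAllows_partialComplement_adj_iff [DecidablePred (· ∈ S)] (e : Option Bool)
    (huv : u ≠ v) :
    EntryAllows e ((G.partialComplement S).Adj u v) ↔
      EntryAllows (if u ∈ S ∧ v ∈ S then negEntry e else e) (G.Adj u v) := by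
  rw [partialComplement_adj_iff G S huv]
  split_ifs with h
  · simp [entryAllows_negEntry, h]
  · simp [h]

end SimpleGraph

section DoubledMatrix

variable {k : ℕ}

def halfIndex (i : Fin (2 * k)) : Fin k :=
  ⟨i / 2, by omega⟩

def doubledIndex (a : Fin k) (p : Prop) [Decidable p] : Fin (2 * k) :=
  ⟨2 * a + if p then 0 else 1, by split <;> omega⟩

lemma halfIndex_doubledIndex (a : Fin k) (p : Prop) [Decidable p] :
    halfIndex (doubledIndex a p) = a := by
  ext
  simp only [halfIndex, doubledIndex]
  split <;> omega

lemma doubledIndex_mod_two_eq_zero_iff (a : Fin k) (p : Prop) [Decidable p] :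
    (doubledIndex a p : ℕ) % 2 = 0 ↔ p := by
  simp only [doubledIndex]
  split <;> simp only [*, iff_true, iff_false] <;> omega

lemma doubledMatrix_apply (M : Fin k → Fin k → Option Bool) (i j : Fin (2 * k)) :
    doubledMatrix M i j =
      if (i : ℕ) % 2 = 0 ∧ (j : ℕ) % 2 = 0 then negEntry (M (halfIndex i) (halfIndex j))
      else M (halfIndex i) (halfIndex j) := by
  unfold doubledMatrix
  split_ifs <;> first | rfl | omega

lemma entryAllows_doubledMatrix_iff {V : Type*} (G : SimpleGraph V) (S : Set V)
    [DecidablePred (· ∈ S)] (M : Fin k → Fin k → Option Bool)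
    {g : V → Fin (2 * k)} {f : V → Fin k}
    (hf : ∀ v, halfIndex (g v) = f v) (hS : ∀ v, (g v : ℕ) % 2 = 0 ↔ v ∈ S)
    {u v : V} (huv : u ≠ v) :
    EntryAllows (doubledMatrix M (g u) (g v)) (G.Adj u v) ↔
      EntryAllows (M (f u) (f v)) ((G.partialComplement S).Adj u v) := by
  rw [G.entryAllows_partialComplement_adj_iff S _ huv, doubledMatrix_apply, hf, hf]
  simp only [hS]

end DoubledMatrix

theorem partialComplement_mPartition_iff_general {V : Type*} {k : ℕ}
    (M : Fin k → Fin k → Option Bool)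
    (G : SimpleGraph V) :
    (∃ S : Set V, (G.partialComplement S).HasMPartition M) ↔
      G.HasMPartition (doubledMatrix M) := by
  simp only [SimpleGraph.hasMPartition_iff_entryAllows]
  constructor
  · rintro ⟨S, f, hf⟩
    classical
    refine ⟨fun v => doubledIndex (f v) (v ∈ S), fun u v huv => ?_⟩
    exact (entryAllows_doubledMatrix_iff G S M (fun _ => halfIndex_doubledIndex _ _)
      (fun _ => doubledIndex_mod_two_eq_zero_iff _ _) huv).2 (hf u v huv)
  · rintro ⟨g, hg⟩
    let S : Set V := {v | (g v : ℕ) % 2 = 0}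
    refine ⟨S, fun v => halfIndex (g v), fun u v huv => ?_⟩
    exact (entryAllows_doubledMatrix_iff G S M (fun _ => rfl) (fun _ => Iff.rfl) huv).1
      (hg u v huv)

/-- A graph `G` has a partial complement admitting an `M`-partition iff `G` itself
admits an `M'`-partition, where `M'` is the doubled matrix of `M`. -/
theorem partialComplement_mPartition_iff {V : Type*} [Fintype V] {k : ℕ} (hk : 0 < k)
    (M : Fin k → Fin k → Option Bool) (hsym : ∀ i j, M i j = M j i)
    (G : SimpleGraph V) :
    (∃ S : Set V, (G.partialComplement S).HasMPartition M) ↔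
      G.HasMPartition (doubledMatrix M) :=
  partialComplement_mPartition_iff_general M G
end

section
/- Let G be a finite simple graph. There exists a set S ⊆ V(G) such that G ⊕ S is a split graph if and only if V(G) can be partitioned into four (possibly empty) sets X₁, X₂, X₃, X₄ such that: X₁ is a clique in G, X₂ is an independent set in G, there is no edge of G between X₁ and X₂, X₃ is an independent set in G, X₄ is a clique in G, and every vertex of X₃ is adjacent in G to every vertex of X₄. -/
/-- A split graph: the vertex set can be partitioned into a clique and an
independent set. -/
def SimpleGraph.IsSplit {V : Type*} (G : SimpleGraph V) : Prop :=
  ∃ C I : Set V, C ∪ I = Set.univ ∧ Disjoint C I ∧ G.IsClique C ∧ G.IsIndepSet' I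

/-! Inside `S` the partial complement `G ⊕ S` is the complement of `G`, and every pair with an
endpoint outside `S` keeps its adjacency. Hence a clique `C` of `G ⊕ S` is the union of
`C ∩ S`, independent in `G`, and `C \ S`, a clique of `G`, completely joined to each other in `G`;
dually an independent set of `G ⊕ S` is the union of a clique of `G` and an independent set
of `G` with no edges between them. Conversely, `X₃ ∪ X₄` and `X₁ ∪ X₂` split `G ⊕ (X₁ ∪ X₃)`. -/

namespace SimpleGraph

variable {V : Type*} {G : SimpleGraph V} {S A B : Set V} {u v : V}

lemma partialComplement_adj_of_mem_s9 (hu : u ∈ S) (hv : v ∈ S) :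
    (G.partialComplement S).Adj u v ↔ u ≠ v ∧ ¬ G.Adj u v := by
  simp [partialComplement, hu, hv]

lemma partialComplement_adj_of_notMem_right (hv : v ∉ S) :
    (G.partialComplement S).Adj u v ↔ G.Adj u v := by
  simp only [partialComplement, hv, and_false, not_false_eq_true, and_true, or_false]
  exact ⟨And.right, fun h => ⟨h.ne, h⟩⟩

lemma partialComplement_adj_of_notMem_left (hu : u ∉ S) :
    (G.partialComplement S).Adj u v ↔ G.Adj u v := by
  rw [adj_comm, partialComplement_adj_of_notMem_right hu, adj_comm]

lemma isClique_partialComplement_union (hA : A ⊆ S) (hB : Disjoint B S) :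
    (G.partialComplement S).IsClique (A ∪ B) ↔
      G.IsIndepSet' A ∧ G.IsClique B ∧ ∀ a ∈ A, ∀ b ∈ B, G.Adj a b := by
  have hBS : ∀ b ∈ B, b ∉ S := fun b hb => Set.disjoint_left.1 hB hb
  rw [IsClique, Set.pairwise_union]
  refine and_congr ?_ (and_congr ?_ ?_)
  · exact forall₂_congr fun x hx => forall₂_congr fun y hy => imp_congr_right fun hxy => by
      rw [partialComplement_adj_of_mem_s9 (hA hx) (hA hy), and_iff_right hxy]
  · exact forall₂_congr fun x hx => forall₂_congr fun y hy => imp_congr_right fun _ =>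
      partialComplement_adj_of_notMem_right (hBS y hy)
  · refine forall₂_congr fun a ha => forall₂_congr fun b hb => ?_
    rw [partialComplement_adj_of_notMem_right (hBS b hb),
      partialComplement_adj_of_notMem_left (hBS b hb), adj_comm, and_self,
      forall_prop_of_true (ne_of_mem_of_not_mem (hA ha) (hBS b hb))]

lemma isIndepSet'_partialComplement_union (hA : A ⊆ S) (hB : Disjoint B S) :
    (G.partialComplement S).IsIndepSet' (A ∪ B) ↔
      G.IsClique A ∧ G.IsIndepSet' B ∧ ∀ a ∈ A, ∀ b ∈ B, ¬ G.Adj a b := by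
  have hBS : ∀ b ∈ B, b ∉ S := fun b hb => Set.disjoint_left.1 hB hb
  change Set.Pairwise _ _ ↔ _
  simp only [Set.pairwise_union]
  refine and_congr ?_ (and_congr ?_ ?_)
  · exact forall₂_congr fun x hx => forall₂_congr fun y hy => imp_congr_right fun hxy => by
      beta_reduce
      rw [partialComplement_adj_of_mem_s9 (hA hx) (hA hy), and_iff_right hxy, not_not]
  · exact forall₂_congr fun x hx => forall₂_congr fun y hy => imp_congr_right fun _ =>
      not_congr (partialComplement_adj_of_notMem_right (hBS y hy))
  · refine forall₂_congr fun a ha => forall₂_congr fun b hb => ?_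
    rw [partialComplement_adj_of_notMem_right (hBS b hb),
      partialComplement_adj_of_notMem_left (hBS b hb), adj_comm, and_self,
      forall_prop_of_true (ne_of_mem_of_not_mem (hA ha) (hBS b hb))]

end SimpleGraph

theorem partialComplement_split_iff_general {V : Type*} (G : SimpleGraph V) :
    (∃ S : Set V, (G.partialComplement S).IsSplit) ↔
    ∃ X₁ X₂ X₃ X₄ : Set V,
      X₁ ∪ X₂ ∪ X₃ ∪ X₄ = Set.univ ∧
      Disjoint X₁ X₂ ∧ Disjoint X₁ X₃ ∧ Disjoint X₁ X₄ ∧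
      Disjoint X₂ X₃ ∧ Disjoint X₂ X₄ ∧ Disjoint X₃ X₄ ∧
      G.IsClique X₁ ∧ G.IsIndepSet' X₂ ∧
      (∀ x ∈ X₁, ∀ y ∈ X₂, ¬ G.Adj x y) ∧
      G.IsIndepSet' X₃ ∧ G.IsClique X₄ ∧
      (∀ x ∈ X₃, ∀ y ∈ X₄, G.Adj x y) := by
  constructor
  · rintro ⟨S, C, I, hcover, hdisj, hC, hI⟩
    rw [← Set.inter_union_sdiff C S, SimpleGraph.isClique_partialComplement_union
      Set.inter_subset_right Set.disjoint_sdiff_left] at hC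
    rw [← Set.inter_union_sdiff I S, SimpleGraph.isIndepSet'_partialComplement_union
      Set.inter_subset_right Set.disjoint_sdiff_left] at hI
    refine ⟨I ∩ S, I \ S, C ∩ S, C \ S, ?_, ?_, ?_, ?_, ?_, ?_, ?_, hI.1, hI.2.1, hI.2.2,
      hC.1, hC.2.1, hC.2.2⟩ <;>
    simp only [Set.disjoint_left, Set.ext_iff, Set.mem_union, Set.mem_inter_iff, Set.mem_sdiff,
      Set.mem_univ] at hcover hdisj ⊢ <;> grind
  · rintro ⟨X₁, X₂, X₃, X₄, hcover, h₁₂, h₁₃, h₁₄, h₂₃, h₂₄, h₃₄, hX₁, hX₂, hX₁₂, hX₃, hX₄, hX₃₄⟩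
    refine ⟨X₁ ∪ X₃, X₃ ∪ X₄, X₁ ∪ X₂, ?_, ?_, ?_, ?_⟩
    · rw [← hcover]; ext; simp only [Set.mem_union]; tauto
    · exact (h₁₃.symm.union_right h₂₃.symm).union_left (h₁₄.symm.union_right h₂₄.symm)
    · exact (SimpleGraph.isClique_partialComplement_union Set.subset_union_right
        (h₁₄.symm.union_right h₃₄.symm)).2 ⟨hX₃, hX₄, hX₃₄⟩
    · exact (SimpleGraph.isIndepSet'_partialComplement_union Set.subset_union_left
        (h₁₂.symm.union_right h₂₃)).2 ⟨hX₁, hX₂, hX₁₂⟩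

/-- Some partial complement of `G` is a split graph iff `V(G)` can be partitioned into
four (possibly empty) sets `X₁, X₂, X₃, X₄` such that `X₁` is a clique, `X₂` is an
independent set, there is no edge between `X₁` and `X₂`, `X₃` is an independent set,
`X₄` is a clique, and every vertex of `X₃` is adjacent to every vertex of `X₄`. -/
theorem partialComplement_split_iff {V : Type*} [Fintype V] (G : SimpleGraph V) :
    (∃ S : Set V, (G.partialComplement S).IsSplit) ↔
    ∃ X₁ X₂ X₃ X₄ : Set V,
      X₁ ∪ X₂ ∪ X₃ ∪ X₄ = Set.univ ∧
      Disjoint X₁ X₂ ∧ Disjoint X₁ X₃ ∧ Disjoint X₁ X₄ ∧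
      Disjoint X₂ X₃ ∧ Disjoint X₂ X₄ ∧ Disjoint X₃ X₄ ∧
      G.IsClique X₁ ∧ G.IsIndepSet' X₂ ∧
      (∀ x ∈ X₁, ∀ y ∈ X₂, ¬ G.Adj x y) ∧
      G.IsIndepSet' X₃ ∧ G.IsClique X₄ ∧
      (∀ x ∈ X₃, ∀ y ∈ X₄, G.Adj x y) :=
  partialComplement_split_iff_general G
end

section
/- Let G be a finite simple graph. There exists a set S ⊆ V(G) such that G ⊕ S is bipartite if and only if V(G) can be partitioned into four (possibly empty) sets X₁, X₂, X₃, X₄ such that: X₁ is a clique in G, X₂ is an independent set in G, there is no edge of G between X₁ and X₂, X₃ is a clique in G, X₄ is an independent set in G, and there is no edge of G between X₃ and X₄. -/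
/-- A bipartite graph: the vertex set can be partitioned into two independent sets. -/
def SimpleGraph.IsBipartite' {V : Type*} (G : SimpleGraph V) : Prop :=
  ∃ A B : Set V, A ∪ B = Set.univ ∧ Disjoint A B ∧ G.IsIndepSet' A ∧ G.IsIndepSet' B

/-!
A set `A` is independent in `G ⊕ S` exactly when `A ∩ S` is a clique of `G`, `A \ S` is
independent in `G`, and `G` has no edge between them. Splitting the two sides of a
bipartition of `G ⊕ S` along `S` therefore gives `X₁, X₂` and `X₃, X₄`; conversely
`S = X₁ ∪ X₃` makes `X₁ ∪ X₂` and `X₃ ∪ X₄` independent in `G ⊕ S`.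
-/

namespace SimpleGraph

variable {V : Type*} {G : SimpleGraph V} {S A C I : Set V}

theorem isIndepSet'_partialComplement_iff :
    (G.partialComplement S).IsIndepSet' A ↔
      G.IsClique (A ∩ S) ∧ G.IsIndepSet' (A \ S) ∧
        ∀ x ∈ A ∩ S, ∀ y ∈ A \ S, ¬G.Adj x y := by
  constructor
  · intro hA
    refine ⟨?_, ?_, ?_⟩
    · intro x hx y hy hne
      by_contra hnadj
      exact hA hx.1 hy.1 hne ⟨hne, Or.inr ⟨hnadj, hx.2, hy.2⟩⟩
    · intro x hx y hy hne hadj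
      exact hA hx.1 hy.1 hne ⟨hne, Or.inl ⟨hadj, fun hS => hx.2 hS.1⟩⟩
    · intro x hx y hy hadj
      exact hA hx.1 hy.1 hadj.ne ⟨hadj.ne, Or.inl ⟨hadj, fun hS => hy.2 hS.2⟩⟩
  · rintro ⟨hC, hI, hCI⟩ x hx y hy hne ⟨-, ⟨hadj, hnS⟩ | ⟨hnadj, hxS, hyS⟩⟩
    · by_cases hxS : x ∈ S <;> by_cases hyS : y ∈ S
      · exact hnS ⟨hxS, hyS⟩
      · exact hCI x ⟨hx, hxS⟩ y ⟨hy, hyS⟩ hadj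
      · exact hCI y ⟨hy, hyS⟩ x ⟨hx, hxS⟩ hadj.symm
      · exact hI ⟨hx, hxS⟩ ⟨hy, hyS⟩ hne hadj
    · exact hnadj (hC ⟨hx, hxS⟩ ⟨hy, hyS⟩ hne)

theorem isIndepSet'_partialComplement_union_s10 (hC : G.IsClique C) (hI : G.IsIndepSet' I)
    (hCI : ∀ x ∈ C, ∀ y ∈ I, ¬G.Adj x y) (hCS : C ⊆ S) (hIS : Disjoint I S) :
    (G.partialComplement S).IsIndepSet' (C ∪ I) := by
  have hinter : (C ∪ I) ∩ S = C := by
    rw [Set.union_inter_distrib_right, Set.inter_eq_left.mpr hCS, hIS.inter_eq, Set.union_empty]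
  have hdiff : (C ∪ I) \ S = I := by
    rw [Set.union_sdiff_distrib, Set.sdiff_eq_empty.mpr hCS, hIS.sdiff_eq_left, Set.empty_union]
  rw [isIndepSet'_partialComplement_iff, hinter, hdiff]
  exact ⟨hC, hI, hCI⟩

end SimpleGraph

theorem partialComplement_bipartite_iff_general {V : Type*} (G : SimpleGraph V) :
    (∃ S : Set V, (G.partialComplement S).IsBipartite') ↔
    ∃ X₁ X₂ X₃ X₄ : Set V,
      X₁ ∪ X₂ ∪ X₃ ∪ X₄ = Set.univ ∧
      Disjoint X₁ X₂ ∧ Disjoint X₁ X₃ ∧ Disjoint X₁ X₄ ∧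
      Disjoint X₂ X₃ ∧ Disjoint X₂ X₄ ∧ Disjoint X₃ X₄ ∧
      G.IsClique X₁ ∧ G.IsIndepSet' X₂ ∧
      (∀ x ∈ X₁, ∀ y ∈ X₂, ¬ G.Adj x y) ∧
      G.IsClique X₃ ∧ G.IsIndepSet' X₄ ∧
      (∀ x ∈ X₃, ∀ y ∈ X₄, ¬ G.Adj x y) := by
  constructor
  · rintro ⟨S, A, B, hcover, hAB, hA, hB⟩
    obtain ⟨hC₁, hI₂, hE₁₂⟩ := SimpleGraph.isIndepSet'_partialComplement_iff.mp hA
    obtain ⟨hC₃, hI₄, hE₃₄⟩ := SimpleGraph.isIndepSet'_partialComplement_iff.mp hB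
    refine ⟨A ∩ S, A \ S, B ∩ S, B \ S, ?_, Set.disjoint_sdiff_inter.symm,
      hAB.mono Set.inter_subset_left Set.inter_subset_left,
      hAB.mono Set.inter_subset_left Set.sdiff_subset,
      hAB.mono Set.sdiff_subset Set.inter_subset_left,
      hAB.mono Set.sdiff_subset Set.sdiff_subset,
      Set.disjoint_sdiff_inter.symm, hC₁, hI₂, hE₁₂, hC₃, hI₄, hE₃₄⟩
    rw [Set.union_assoc, Set.inter_union_sdiff, Set.inter_union_sdiff, hcover]
  · rintro ⟨X₁, X₂, X₃, X₄, hcover, h₁₂, h₁₃, h₁₄, h₂₃, h₂₄, h₃₄, hC₁, hI₂, hE₁₂,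
      hC₃, hI₄, hE₃₄⟩
    refine ⟨X₁ ∪ X₃, X₁ ∪ X₂, X₃ ∪ X₄, (Set.union_assoc _ _ _).symm.trans hcover, ?_,
      SimpleGraph.isIndepSet'_partialComplement_union_s10 hC₁ hI₂ hE₁₂
        Set.subset_union_left (Set.disjoint_union_right.mpr ⟨h₁₂.symm, h₂₃⟩),
      SimpleGraph.isIndepSet'_partialComplement_union_s10 hC₃ hI₄ hE₃₄
        Set.subset_union_right (Set.disjoint_union_right.mpr ⟨h₁₄.symm, h₃₄.symm⟩)⟩
    rw [Set.disjoint_union_left, Set.disjoint_union_right, Set.disjoint_union_right]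
    exact ⟨⟨h₁₃, h₁₄⟩, h₂₃, h₂₄⟩

/-- Some partial complement of `G` is bipartite iff `V(G)` can be partitioned into
four (possibly empty) sets `X₁, X₂, X₃, X₄` such that `X₁` is a clique, `X₂` is an
independent set, there is no edge between `X₁` and `X₂`, `X₃` is a clique, `X₄` is an
independent set, and there is no edge between `X₃` and `X₄`. -/
theorem partialComplement_bipartite_iff {V : Type*} [Fintype V] (G : SimpleGraph V) :
    (∃ S : Set V, (G.partialComplement S).IsBipartite') ↔
    ∃ X₁ X₂ X₃ X₄ : Set V,
      X₁ ∪ X₂ ∪ X₃ ∪ X₄ = Set.univ ∧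
      Disjoint X₁ X₂ ∧ Disjoint X₁ X₃ ∧ Disjoint X₁ X₄ ∧
      Disjoint X₂ X₃ ∧ Disjoint X₂ X₄ ∧ Disjoint X₃ X₄ ∧
      G.IsClique X₁ ∧ G.IsIndepSet' X₂ ∧
      (∀ x ∈ X₁, ∀ y ∈ X₂, ¬ G.Adj x y) ∧
      G.IsClique X₃ ∧ G.IsIndepSet' X₄ ∧
      (∀ x ∈ X₃, ∀ y ∈ X₄, ¬ G.Adj x y) :=
  partialComplement_bipartite_iff_general G
end

section
/- Let G be a finite simple graph, d a nonnegative integer, S ⊆ V(G), and X ⊆ S with |X| = 2d + 1. Let Y be the set of vertices v ∈ V(G) \ X having at least d + 1 neighbors in X. If |Y \ S| > (d + 1) · C(2d+1, d+1), then there exist a set A ⊆ Y \ S with |A| = d + 1 and a set B ⊆ X with |B| = d + 1 such that every vertex of A is adjacent to every vertex of B in G ⊕ S; in particular, G ⊕ S contains K_{d+1,d+1} as a subgraph. -/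
open Finset

theorem Finset.exists_rel_rectangle_of_mul_choose_lt {α β : Type*} (r : α → β → Prop)
    {T : Finset α} {X : Finset β} {k n : ℕ}
    (hT : ∀ a ∈ T, ∃ B ⊆ X, #B = k ∧ ∀ b ∈ B, r a b) (hcard : n * (#X).choose k < #T) :
    ∃ A ⊆ T, ∃ B ⊆ X, n < #A ∧ #B = k ∧ ∀ a ∈ A, ∀ b ∈ B, r a b := by
  classical
  choose! f hfX hfcard hfr using hT
  have hmaps : ∀ a ∈ T, f a ∈ X.powersetCard k := fun a ha =>
    mem_powersetCard.mpr ⟨hfX a ha, hfcard a ha⟩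
  obtain ⟨B, hB, hfiber⟩ := exists_lt_card_fiber_of_mul_lt_card_of_maps_to hmaps
    (by rwa [card_powersetCard, Nat.mul_comm])
  refine ⟨{a ∈ T | f a = B}, filter_subset _ _, B, (mem_powersetCard.mp hB).1, hfiber,
    (mem_powersetCard.mp hB).2, fun a ha b hb => ?_⟩
  obtain ⟨haT, rfl⟩ := mem_filter.mp ha
  exact hfr a haT b hb

theorem SimpleGraph.partialComplement_adj_of_adj_of_notMem_s14 {V : Type*} {G : SimpleGraph V}
    {S : Set V} {u v : V} (h : G.Adj u v) (hu : u ∉ S) : (G.partialComplement S).Adj u v :=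
  ⟨h.ne, Or.inl ⟨h, fun huv => hu huv.1⟩⟩

theorem partialComplement_completeBipartite_of_many_high_degree_general {V : Type*} [Fintype V]
    (G : SimpleGraph V) (d : ℕ) (S : Set V) (X : Set V)
    (hX : X.ncard = 2 * d + 1) :
    let Y : Set V := {v | v ∉ X ∧ d + 1 ≤ (G.neighborSet v ∩ X).ncard}
    (d + 1) * Nat.choose (2 * d + 1) (d + 1) < (Y \ S).ncard →
    ∃ A B : Set V, A ⊆ Y \ S ∧ B ⊆ X ∧ A.ncard = d + 1 ∧ B.ncard = d + 1 ∧
      ∀ a ∈ A, ∀ b ∈ B, (G.partialComplement S).Adj a b := by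
  classical
  intro Y hY
  have hneighbors : ∀ a ∈ (Y \ S).toFinset,
      ∃ B ⊆ X.toFinset, #B = d + 1 ∧ ∀ b ∈ B, G.Adj a b := by
    intro a ha
    obtain ⟨C, hC, hCcard⟩ := Set.exists_subset_card_eq (Set.mem_toFinset.mp ha).1.2
    refine ⟨C.toFinset, Set.toFinset_subset_toFinset.mpr fun b hb => (hC hb).2, ?_,
      fun b hb => (hC (Set.mem_toFinset.mp hb)).1⟩
    rw [← Set.ncard_eq_toFinset_card', hCcard]
  obtain ⟨A, hA, B, hB, hAcard, hBcard, hAB⟩ := exists_rel_rectangle_of_mul_choose_lt G.Adj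
    hneighbors (by rwa [← Set.ncard_eq_toFinset_card', ← Set.ncard_eq_toFinset_card', hX])
  obtain ⟨A', hA'A, hA'card⟩ := exists_subset_card_eq hAcard.le
  refine ⟨A', B, fun a ha => Set.mem_toFinset.mp (hA (hA'A ha)),
    fun b hb => Set.mem_toFinset.mp (hB hb), by simpa, by simpa, fun a ha b hb => ?_⟩
  exact SimpleGraph.partialComplement_adj_of_adj_of_notMem_s14 (hAB a (hA'A ha) b hb)
    (Set.mem_toFinset.mp (hA (hA'A ha))).2

/-- Degenerate large-`Y` case: if `X ⊆ S` has size `2d+1` and more than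
`(d+1)·C(2d+1, d+1)` vertices outside `S` (and outside `X`) have at least `d+1`
neighbors in `X`, then `G ⊕ S` contains `K_{d+1,d+1}` as a subgraph, with one side
inside `Y \ S` and the other inside `X`. -/
theorem partialComplement_completeBipartite_of_many_high_degree {V : Type*} [Fintype V]
    (G : SimpleGraph V) (d : ℕ) (S : Set V) (X : Set V)
    (hXS : X ⊆ S) (hX : X.ncard = 2 * d + 1) :
    let Y : Set V := {v | v ∉ X ∧ d + 1 ≤ (G.neighborSet v ∩ X).ncard}
    (d + 1) * Nat.choose (2 * d + 1) (d + 1) < (Y \ S).ncard →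
    ∃ A B : Set V, A ⊆ Y \ S ∧ B ⊆ X ∧ A.ncard = d + 1 ∧ B.ncard = d + 1 ∧
      ∀ a ∈ A, ∀ b ∈ B, (G.partialComplement S).Adj a b :=
  partialComplement_completeBipartite_of_many_high_degree_general G d S X hX
end

section
/- Let k ≥ 2 and r > k be integers with r − k even. Let G be a finite simple r-regular graph containing a clique C with |C| = k, and let G' be the disjoint union of G and the gadget graph gdg_{k,r}. Let S = C ∪ {c_1, …, c_{k−1}} (the clique C together with the clique vertices of the gadget). Then G' ⊕ S is r-regular. -/
/-- The vertex type of the gadget `gdg_{k,r}`: `Sum.inl i` is the clique vertex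
`c_{i+1}`, and `Sum.inr (i, j, false)` / `Sum.inr (i, j, true)` are the vertices
`a^{i+1}_{j+1}` / `b^{i+1}_{j+1}` respectively. -/
abbrev GadgetVertex (k r : ℕ) := Fin (k - 1) ⊕ (Fin (k - 1) × Fin r × Bool)

/-- The gadget graph `gdg_{k,r}`: the vertices `c_1, …, c_{k-1}` form a clique; for each
`i`, the vertices `a^i_1, …, a^i_r, b^i_1, …, b^i_r` form a complete bipartite graph
`K_{r,r}` minus the matching `{a^i_j b^i_j : j ≤ (r-k)/2}`; and `c_i` is joined to
`a^i_j` and `b^i_j` for all `j ≤ (r-k)/2`. -/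
def gadgetGraph (k r : ℕ) : SimpleGraph (GadgetVertex k r) :=
  SimpleGraph.fromRel (fun x y =>
    match x, y with
    | Sum.inl _, Sum.inl _ => True
    | Sum.inl i, Sum.inr (i', j, _) => i = i' ∧ (j : ℕ) < (r - k) / 2
    | Sum.inr (i', j, _), Sum.inl i => i = i' ∧ (j : ℕ) < (r - k) / 2
    | Sum.inr (i, j, s), Sum.inr (i', l, t) =>
        i = i' ∧ s ≠ t ∧ ¬(j = l ∧ (j : ℕ) < (r - k) / 2))

/-!
Partial complementation leaves the neighbourhood of a vertex outside `S` unchanged, and gives a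
vertex `v ∈ S` the degree `deg v + |S| - 1 - 2 |N(v) ∩ S|`. Here `|S| = 2k - 1`. A vertex of the
clique `C` has `|N(v) ∩ S| = k - 1`, so its degree stays `r`. A gadget vertex `c_i` has degree
`(k - 2) + (r - k)` in the gadget and `|N(c_i) ∩ S| = k - 2`, so it gets degree `r`. The vertices
`a^i_j`, `b^i_j` lie outside `S` and already have degree `r` in the gadget: for `j ≤ (r - k)/2`
the missing matching edge is replaced by the edge to `c_i`.
-/

theorem Set.ncard_image_inl_union_image_inr {α β : Type*} {s : Set α} {t : Set β}
    (hs : s.Finite) (ht : t.Finite) :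
    (Sum.inl '' s ∪ Sum.inr '' t).ncard = s.ncard + t.ncard := by
  rw [Set.ncard_union_eq Set.disjoint_image_inl_image_inr (hs.image _) (ht.image _),
    Set.ncard_image_of_injective _ Sum.inl_injective,
    Set.ncard_image_of_injective _ Sum.inr_injective]

theorem Fin.ncard_setOf_val_lt {n m : ℕ} (h : m ≤ n) : {i : Fin n | (i : ℕ) < m}.ncard = m := by
  rw [Set.ncard_eq_toFinset_card', Set.toFinset_ofPred, Fin.card_filter_val_lt, min_eq_right h]

namespace SimpleGraph

section PartialComplement

variable {W : Type*} (H : SimpleGraph W) (S : Set W) {v : W}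

@[simp]
theorem partialComplement_adj {u w : W} :
    (H.partialComplement S).Adj u w ↔
      u ≠ w ∧ ((H.Adj u w ∧ ¬(u ∈ S ∧ w ∈ S)) ∨ (¬H.Adj u w ∧ u ∈ S ∧ w ∈ S)) :=
  Iff.rfl

theorem neighborSet_partialComplement_of_notMem (hv : v ∉ S) :
    (H.partialComplement S).neighborSet v = H.neighborSet v := by
  ext w
  simp only [mem_neighborSet, partialComplement_adj]
  exact ⟨fun h => h.2.elim And.left fun h => absurd h.2.1 hv,
    fun h => ⟨h.ne, .inl ⟨h, fun h => hv h.1⟩⟩⟩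

theorem neighborSet_partialComplement_of_mem (hv : v ∈ S) :
    (H.partialComplement S).neighborSet v =
      (H.neighborSet v \ S) ∪ (S \ insert v (H.neighborSet v)) := by
  ext w
  simp only [mem_neighborSet, partialComplement_adj, Set.mem_union, Set.mem_sdiff,
    Set.mem_insert_iff, mem_neighborSet]
  constructor
  · rintro ⟨hne, ⟨hadj, hS⟩ | ⟨hadj, -, hw⟩⟩
    · exact .inl ⟨hadj, fun hw => hS ⟨hv, hw⟩⟩
    · exact .inr ⟨hw, by rintro (rfl | h) <;> contradiction⟩
  · rintro (⟨hadj, hw⟩ | ⟨hw, hvw⟩)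
    · exact ⟨hadj.ne, .inl ⟨hadj, fun h => hw h.2⟩⟩
    · exact ⟨fun h => hvw (.inl h.symm), .inr ⟨fun h => hvw (.inr h), hv, hw⟩⟩

theorem ncard_neighborSet_partialComplement_of_mem (hv : v ∈ S)
    (hN : (H.neighborSet v).Finite) (hS : S.Finite) :
    ((H.partialComplement S).neighborSet v).ncard + 2 * (H.neighborSet v ∩ S).ncard + 1 =
      (H.neighborSet v).ncard + S.ncard := by
  have hdisj : Disjoint (H.neighborSet v \ S) (S \ insert v (H.neighborSet v)) :=
    Set.disjoint_left.2 fun w hw hw' => hw.2 hw'.1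
  have hinter : S ∩ insert v (H.neighborSet v) = insert v (H.neighborSet v ∩ S) := by
    rw [Set.inter_insert_of_mem hv, Set.inter_comm]
  have hcardN := Set.ncard_inter_add_ncard_sdiff_eq_ncard (H.neighborSet v) S hN
  have hcardS := Set.ncard_inter_add_ncard_sdiff_eq_ncard S (insert v (H.neighborSet v)) hS
  rw [hinter, Set.ncard_insert_of_notMem (fun h => H.irrefl h.1) (hN.inter_of_left S)]
    at hcardS
  rw [neighborSet_partialComplement_of_mem H S hv, Set.ncard_union_eq hdisj hN.sdiff hS.sdiff]
  omega

end PartialComplement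

variable {V W : Type*} {G : SimpleGraph V} {H : SimpleGraph W}

theorem IsClique.neighborSet_inter_of_mem {C : Set V} (hC : G.IsClique C) {v : V} (hv : v ∈ C) :
    G.neighborSet v ∩ C = C \ {v} := by
  ext u
  simp only [Set.mem_inter_iff, mem_neighborSet, Set.mem_sdiff, Set.mem_singleton_iff]
  exact ⟨fun h => ⟨h.2, h.1.ne'⟩, fun h => ⟨hC hv h.1 (Ne.symm h.2), h.1⟩⟩

theorem IsClique.finite_of_mem {C : Set V} (hC : G.IsClique C) {v : V} (hv : v ∈ C)
    (hN : (G.neighborSet v).Finite) : C.Finite :=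
  (hC.neighborSet_inter_of_mem hv ▸ hN.inter_of_left C).of_sdiff (Set.finite_singleton v)

variable {S : Set V} {T : Set W}

theorem ncard_neighborSet_partialComplement_sum_inl {v : V} (hv : v ∈ S)
    (hN : (G.neighborSet v).Finite) (hS : S.Finite) (hT : T.Finite) :
    (((G ⊕g H).partialComplement (Sum.inl '' S ∪ Sum.inr '' T)).neighborSet (.inl v)).ncard +
        2 * (G.neighborSet v ∩ S).ncard + 1 =
      (G.neighborSet v).ncard + S.ncard + T.ncard := by
  have hinter : Sum.inl '' G.neighborSet v ∩ (Sum.inl '' S ∪ Sum.inr '' T) =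
      Sum.inl '' (G.neighborSet v ∩ S) := by
    ext (u | w) <;> simp
  have h := ncard_neighborSet_partialComplement_of_mem (G ⊕g H) (Sum.inl '' S ∪ Sum.inr '' T)
    (.inl ⟨v, hv, rfl⟩) (by rw [neighborSet_sum_inl]; exact hN.image _)
    ((hS.image _).union (hT.image _))
  rwa [neighborSet_sum_inl, hinter, Set.ncard_image_of_injective _ Sum.inl_injective,
    Set.ncard_image_of_injective _ Sum.inl_injective,
    Set.ncard_image_inl_union_image_inr hS hT, ← add_assoc] at h

theorem ncard_neighborSet_partialComplement_sum_inr {w : W} (hw : w ∈ T)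
    (hN : (H.neighborSet w).Finite) (hS : S.Finite) (hT : T.Finite) :
    (((G ⊕g H).partialComplement (Sum.inl '' S ∪ Sum.inr '' T)).neighborSet (.inr w)).ncard +
        2 * (H.neighborSet w ∩ T).ncard + 1 =
      (H.neighborSet w).ncard + S.ncard + T.ncard := by
  have hinter : Sum.inr '' H.neighborSet w ∩ (Sum.inl '' S ∪ Sum.inr '' T) =
      Sum.inr '' (H.neighborSet w ∩ T) := by
    ext (u | x) <;> simp
  have h := ncard_neighborSet_partialComplement_of_mem (G ⊕g H) (Sum.inl '' S ∪ Sum.inr '' T)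
    (.inr ⟨w, hw, rfl⟩) (by rw [neighborSet_sum_inr]; exact hN.image _)
    ((hS.image _).union (hT.image _))
  rw [neighborSet_sum_inr, hinter, Set.ncard_image_of_injective _ Sum.inr_injective,
    Set.ncard_image_of_injective _ Sum.inr_injective,
    Set.ncard_image_inl_union_image_inr hS hT] at h
  omega

end SimpleGraph

namespace gadgetGraph

variable {k r : ℕ}

@[simp]
theorem adj_inl_inl {i i' : Fin (k - 1)} :
    (gadgetGraph k r).Adj (.inl i) (.inl i') ↔ i ≠ i' := by
  simp [gadgetGraph]

@[simp]
theorem adj_inl_inr {i i' : Fin (k - 1)} {j : Fin r} {s : Bool} :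
    (gadgetGraph k r).Adj (.inl i) (.inr (i', j, s)) ↔ i = i' ∧ (j : ℕ) < (r - k) / 2 := by
  simp [gadgetGraph]

@[simp]
theorem adj_inr_inl {i i' : Fin (k - 1)} {j : Fin r} {s : Bool} :
    (gadgetGraph k r).Adj (.inr (i', j, s)) (.inl i) ↔ i = i' ∧ (j : ℕ) < (r - k) / 2 := by
  rw [SimpleGraph.adj_comm, adj_inl_inr]

@[simp]
theorem adj_inr_inr {i i' : Fin (k - 1)} {j l : Fin r} {s t : Bool} :
    (gadgetGraph k r).Adj (.inr (i, j, s)) (.inr (i', l, t)) ↔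
      i = i' ∧ s ≠ t ∧ ¬(j = l ∧ (j : ℕ) < (r - k) / 2) := by
  simp [gadgetGraph]
  grind

theorem neighborSet_inl (i : Fin (k - 1)) :
    (gadgetGraph k r).neighborSet (.inl i) =
      Sum.inl '' {i}ᶜ ∪ Sum.inr '' ({i} ×ˢ {j : Fin r | (j : ℕ) < (r - k) / 2} ×ˢ Set.univ) := by
  ext (i' | ⟨i', j, s⟩) <;> simp [eq_comm (a := i)]

theorem neighborSet_inr_of_lt {i : Fin (k - 1)} {j : Fin r} (s : Bool)
    (hj : (j : ℕ) < (r - k) / 2) :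
    (gadgetGraph k r).neighborSet (.inr (i, j, s)) =
      insert (.inl i) (Sum.inr '' ({i} ×ˢ {j}ᶜ ×ˢ {!s})) := by
  ext (i' | ⟨i', l, t⟩)
  · simp [hj]
  · simp [Bool.eq_not_iff, eq_comm (a := i), eq_comm (a := t), eq_comm (a := l), and_comm, hj]

theorem neighborSet_inr_of_le {i : Fin (k - 1)} {j : Fin r} (s : Bool)
    (hj : (r - k) / 2 ≤ (j : ℕ)) :
    (gadgetGraph k r).neighborSet (.inr (i, j, s)) = Sum.inr '' ({i} ×ˢ Set.univ ×ˢ {!s}) := by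
  ext (i' | ⟨i', l, t⟩)
  · simp [hj]
  · simp [Bool.eq_not_iff, eq_comm (a := i), eq_comm (a := t), hj]

theorem ncard_range_inl : (Set.range (Sum.inl : Fin (k - 1) → GadgetVertex k r)).ncard = k - 1 := by
  rw [Set.ncard_range_of_injective Sum.inl_injective, Nat.card_eq_fintype_card, Fintype.card_fin]

theorem ncard_neighborSet_inl (i : Fin (k - 1)) :
    ((gadgetGraph k r).neighborSet (.inl i)).ncard = k - 2 + 2 * ((r - k) / 2) := by
  rw [neighborSet_inl, Set.ncard_image_inl_union_image_inr (Set.toFinite _) (Set.toFinite _),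
    Set.ncard_compl, Set.ncard_prod, Set.ncard_prod, Fin.ncard_setOf_val_lt (by omega)]
  simp only [Nat.card_eq_fintype_card, Fintype.card_fin, Set.ncard_singleton, Set.ncard_univ,
    Fintype.card_bool]
  omega

theorem ncard_neighborSet_inl_inter_range_inl (i : Fin (k - 1)) :
    ((gadgetGraph k r).neighborSet (.inl i) ∩ Set.range Sum.inl).ncard = k - 2 := by
  have h : (gadgetGraph k r).neighborSet (.inl i) ∩ Set.range Sum.inl = Sum.inl '' {i}ᶜ := by
    ext (i' | p) <;> simp [eq_comm (a := i)]
  rw [h, Set.ncard_image_of_injective _ Sum.inl_injective, Set.ncard_compl, Set.ncard_singleton,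
    Nat.card_eq_fintype_card, Fintype.card_fin]
  omega

theorem ncard_neighborSet_inr (p : Fin (k - 1) × Fin r × Bool) :
    ((gadgetGraph k r).neighborSet (.inr p)).ncard = r := by
  obtain ⟨i, j, s⟩ := p
  rcases lt_or_ge (j : ℕ) ((r - k) / 2) with hj | hj
  · rw [neighborSet_inr_of_lt s hj, Set.ncard_insert_of_notMem (by simp),
      Set.ncard_image_of_injective _ Sum.inr_injective, Set.ncard_prod, Set.ncard_prod,
      Set.ncard_compl]
    simp only [Nat.card_eq_fintype_card, Fintype.card_fin, Set.ncard_singleton]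
    omega
  · rw [neighborSet_inr_of_le s hj, Set.ncard_image_of_injective _ Sum.inr_injective,
      Set.ncard_prod, Set.ncard_prod]
    simp

end gadgetGraph

theorem partialComplement_disjUnion_gadget_regular_general {V : Type*}
    (G : SimpleGraph V) (k r : ℕ) (hkr : k < r)
    (heven : Even (r - k))
    (hreg : ∀ v : V, (G.neighborSet v).ncard = r)
    (C : Set V) (hC : G.IsClique C) (hCcard : C.ncard = k) :
    ∀ x : V ⊕ GadgetVertex k r,
      (((G ⊕g gadgetGraph k r).partialComplement
          (Sum.inl '' C ∪ Sum.inr '' (Set.range Sum.inl))).neighborSet x).ncard = r := by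
  have hfin (v : V) : (G.neighborSet v).Finite := Set.finite_of_ncard_pos (by rw [hreg]; omega)
  have hm : 2 * ((r - k) / 2) + k = r := by
    obtain ⟨t, ht⟩ := heven
    omega
  rintro (v | i | p)
  · by_cases hv : v ∈ C
    · have hCfin := hC.finite_of_mem hv (hfin v)
      have hk : 0 < k := hCcard ▸ (Set.ncard_pos hCfin).2 ⟨v, hv⟩
      have h := SimpleGraph.ncard_neighborSet_partialComplement_sum_inl (H := gadgetGraph k r) hv
        (hfin v) hCfin (Set.finite_range Sum.inl)
      rw [hC.neighborSet_inter_of_mem hv, Set.ncard_sdiff_singleton_of_mem hv, hreg, hCcard,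
        gadgetGraph.ncard_range_inl] at h
      omega
    · rw [SimpleGraph.neighborSet_partialComplement_of_notMem _ _ (by simp [hv]),
        SimpleGraph.neighborSet_sum_inl, Set.ncard_image_of_injective _ Sum.inl_injective, hreg]
  · have hk : 0 < k - 1 := i.pos
    have hCfin : C.Finite := Set.finite_of_ncard_pos (by omega)
    have h := SimpleGraph.ncard_neighborSet_partialComplement_sum_inr (G := G)
      (H := gadgetGraph k r) (T := Set.range Sum.inl) (Set.mem_range_self i) (Set.toFinite _) hCfin
      (Set.finite_range _)
    rw [gadgetGraph.ncard_neighborSet_inl_inter_range_inl, gadgetGraph.ncard_neighborSet_inl,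
      hCcard, gadgetGraph.ncard_range_inl] at h
    omega
  · rw [SimpleGraph.neighborSet_partialComplement_of_notMem _ _ (by simp),
      SimpleGraph.neighborSet_sum_inr, Set.ncard_image_of_injective _ Sum.inr_injective,
      gadgetGraph.ncard_neighborSet_inr]

/-- If `G` is `r`-regular and contains a clique `C` of size `k` (with `2 ≤ k < r`,
`r - k` even), then partially complementing the disjoint union `G' = G ⊔ gdg_{k,r}`
with respect to `S = C ∪ {c_1, …, c_{k-1}}` yields an `r`-regular graph (degrees are
measured as the cardinalities of neighbor sets). -/
theorem partialComplement_disjUnion_gadget_regular {V : Type*} [Fintype V]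
    (G : SimpleGraph V) (k r : ℕ) (hk : 2 ≤ k) (hkr : k < r)
    (heven : Even (r - k))
    (hreg : ∀ v : V, (G.neighborSet v).ncard = r)
    (C : Set V) (hC : G.IsClique C) (hCcard : C.ncard = k) :
    ∀ x : V ⊕ GadgetVertex k r,
      (((G ⊕g gadgetGraph k r).partialComplement
          (Sum.inl '' C ∪ Sum.inr '' (Set.range Sum.inl))).neighborSet x).ncard = r :=
  partialComplement_disjUnion_gadget_regular_general G k r hkr heven hreg C hC hCcard
end
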